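/- Let O be a type constant, X a type variable, G a type, and set G° = O → (G ∧ O) where G ∧ O = ∀Y((G → (O → Y)) → Y). Define, by induction on a type F, λ-terms T_F and T'_F by: T_F = T'_F = λx.x if X ∉ Fv(F); T_X = λxλβλg.(g)xα and T'_X = λx.(x)α𝟙 where 𝟙 = λxλy.x; T_{C→D} = λxλy.(T_D)(x)(T'_C)y and T'_{C→D} = λxλy.(T'_D)(x)(T_C)y; T_{∀Y B} = λx.(T_B)x and T'_{∀Y B} = λx.(T'_B)x. Then for every type A: α : O ⊢_F T_A : A[G/X] → A[G°/X] and α : O ⊢_F T'_A : A[G°/X] → A[G/X]. -/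
import Mathlib


/-!
Common development: pure λ-calculus in de Bruijn notation, β-reduction,
weak head reduction, types of system F (with type constants), the typing
systems F, F₀ (F without (∀e)) and the simple system S, saturated sets and
interpretations, and the notions of input / output / data types, following
Farkh-Nour, "Les types de données syntaxiques du système F".
-/

namespace FarkhNour

/-- Pure λ-terms, in de Bruijn notation. -/
inductive Trm : Type
  | var : ℕ → Trm
  | app : Trm → Trm → Trm
  | lam : Trm → Trm

/-- Lift (shift) by `d` the free variables of a term, starting at index `k`. -/
def liftTrm (d : ℕ) : ℕ → Trm → Trm
  | k, .var n => if n < k then .var n else .var (n + d)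
  | k, .app a b => .app (liftTrm d k a) (liftTrm d k b)
  | k, .lam a => .lam (liftTrm d (k + 1) a)

/-- β-substitution `t[u/k]` (the binder for `k` is consumed: variables above `k`
are decremented), as used in the β-reduction rule. -/
def substTrm : Trm → ℕ → Trm → Trm
  | .var n, k, u => if n < k then .var n else if n = k then liftTrm k 0 u else .var (n - 1)
  | .app a b, k, u => .app (substTrm a k u) (substTrm b k u)
  | .lam a, k, u => .lam (substTrm a (k + 1) u)

/-- Named-style capture-avoiding substitution `t[u/x]` of the term `u` for the
free variable `x` of `t` : the other free variables are left unchanged. -/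
def replaceVar : Trm → ℕ → Trm → Trm
  | .var n, k, u => if n = k then u else .var n
  | .app a b, k, u => .app (replaceVar a k u) (replaceVar b k u)
  | .lam a, k, u => .lam (replaceVar a (k + 1) (liftTrm 1 0 u))

/-- Lifting of a parallel substitution under a binder. -/
def liftSub (σ : ℕ → Trm) : ℕ → Trm
  | 0 => .var 0
  | n + 1 => liftTrm 1 0 (σ n)

/-- Simultaneous (parallel) capture-avoiding substitution. -/
def msubst (σ : ℕ → Trm) : Trm → Trm
  | .var n => σ n
  | .app a b => .app (msubst σ a) (msubst σ b)
  | .lam a => .lam (msubst (liftSub σ) a)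

/-- One step of β-reduction. -/
inductive BetaStep : Trm → Trm → Prop
  | beta (t u : Trm) : BetaStep (.app (.lam t) u) (substTrm t 0 u)
  | appL {t t' : Trm} (u : Trm) : BetaStep t t' → BetaStep (.app t u) (.app t' u)
  | appR (t : Trm) {u u' : Trm} : BetaStep u u' → BetaStep (.app t u) (.app t u')
  | lam {t t' : Trm} : BetaStep t t' → BetaStep (.lam t) (.lam t')

/-- Many-step β-reduction `t →β t'`. -/
def BetaRed : Trm → Trm → Prop := Relation.ReflTransGen BetaStep

/-- β-equivalence `t ≃β t'`. -/
def BetaEq : Trm → Trm → Prop := Relation.EqvGen BetaStep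

/-- A term is normal iff no β-reduction step applies to it. -/
def IsNormal (t : Trm) : Prop := ∀ u, ¬ BetaStep t u

/-- `FreeIn k t` : the variable (de Bruijn index) `k` occurs free in `t`. -/
def FreeIn : ℕ → Trm → Prop
  | k, .var n => n = k
  | k, .app a b => FreeIn k a ∨ FreeIn k b
  | k, .lam a => FreeIn (k + 1) a

/-- A closed term. -/
def TrmClosed (t : Trm) : Prop := ∀ k, ¬ FreeIn k t

/-- One step of weak head reduction. -/
inductive WHStep : Trm → Trm → Prop
  | beta (t u : Trm) : WHStep (.app (.lam t) u) (substTrm t 0 u)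
  | app {t t' : Trm} (u : Trm) : WHStep t t' → WHStep (.app t u) (.app t' u)

/-- Weak head reduction `t ≻_f t'`. -/
def WHRed : Trm → Trm → Prop := Relation.ReflTransGen WHStep

/-- Types of system F, in de Bruijn notation, with type constants
(the constant `0` is the distinguished constant `O`, the constant `1` is `⊥`). -/
inductive Ty : Type
  | var : ℕ → Ty
  | const : ℕ → Ty
  | arr : Ty → Ty → Ty
  | all : Ty → Ty

/-- The distinguished type constant `O`. -/
def tyO : Ty := .const 0

/-- The distinguished type constant `⊥`. -/
def tyBot : Ty := .const 1

/-- Lift (shift) by `d` the free type variables, starting at index `k`. -/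
def liftTy (d : ℕ) : ℕ → Ty → Ty
  | k, .var n => if n < k then .var n else .var (n + d)
  | _, .const c => .const c
  | k, .arr a b => .arr (liftTy d k a) (liftTy d k b)
  | k, .all a => .all (liftTy d (k + 1) a)

/-- Capture-avoiding type substitution `A[G/k]`. -/
def substTy : Ty → ℕ → Ty → Ty
  | .var n, k, G => if n < k then .var n else if n = k then liftTy k 0 G else .var (n - 1)
  | .const c, _, _ => .const c
  | .arr a b, k, G => .arr (substTy a k G) (substTy b k G)
  | .all a, k, G => .all (substTy a (k + 1) G)

/-- `TyFreeIn k A` : the type variable `k` occurs free in `A`. -/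
def TyFreeIn : ℕ → Ty → Prop
  | k, .var n => n = k
  | _, .const _ => False
  | k, .arr a b => TyFreeIn k a ∨ TyFreeIn k b
  | k, .all a => TyFreeIn (k + 1) a

/-- Boolean version of `TyFreeIn`. -/
def tyFreeInB : ℕ → Ty → Bool
  | k, .var n => n == k
  | _, .const _ => false
  | k, .arr a b => tyFreeInB k a || tyFreeInB k b
  | k, .all a => tyFreeInB (k + 1) a

/-- A closed type. -/
def TyClosed (A : Ty) : Prop := ∀ k, ¬ TyFreeIn k A

/-- `ContainsConst c A` : the type constant `c` occurs in `A`. -/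
def ContainsConst : ℕ → Ty → Prop
  | _, .var _ => False
  | c, .const c' => c' = c
  | c, .arr a b => ContainsConst c a ∨ ContainsConst c b
  | c, .all a => ContainsConst c a

/-- The typing judgment `Γ ⊢_F t : A` of system F, with rules
(ax), (→i), (→e), (∀i), (∀e). -/
inductive TypF : List Ty → Trm → Ty → Prop
  | var (Γ : List Ty) (n : ℕ) (A : Ty) : Γ[n]? = some A → TypF Γ (.var n) A
  | abs {Γ : List Ty} {t : Trm} {B C : Ty} :
      TypF (B :: Γ) t C → TypF Γ (.lam t) (.arr B C)
  | app {Γ : List Ty} {u v : Trm} {B C : Ty} :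
      TypF Γ u (.arr B C) → TypF Γ v B → TypF Γ (.app u v) C
  | allI {Γ : List Ty} {t : Trm} {A : Ty} :
      TypF (Γ.map (liftTy 1 0)) t A → TypF Γ t (.all A)
  | allE {Γ : List Ty} {t : Trm} {A : Ty} (G : Ty) :
      TypF Γ t (.all A) → TypF Γ t (substTy A 0 G)

/-- The typing judgment `Γ ⊢_{F₀} t : A` of system F₀, i.e. system F
without the rule (∀e). -/
inductive TypF0 : List Ty → Trm → Ty → Prop
  | var (Γ : List Ty) (n : ℕ) (A : Ty) : Γ[n]? = some A → TypF0 Γ (.var n) A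
  | abs {Γ : List Ty} {t : Trm} {B C : Ty} :
      TypF0 (B :: Γ) t C → TypF0 Γ (.lam t) (.arr B C)
  | app {Γ : List Ty} {u v : Trm} {B C : Ty} :
      TypF0 Γ u (.arr B C) → TypF0 Γ v B → TypF0 Γ (.app u v) C
  | allI {Γ : List Ty} {t : Trm} {A : Ty} :
      TypF0 (Γ.map (liftTy 1 0)) t A → TypF0 Γ t (.all A)

/-- The typing judgment `Γ ⊢_S t : A` of the simple type system S,
with rules (ax), (→i), (→e) only. -/
inductive TypS : List Ty → Trm → Ty → Prop
  | var (Γ : List Ty) (n : ℕ) (A : Ty) : Γ[n]? = some A → TypS Γ (.var n) A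
  | abs {Γ : List Ty} {t : Trm} {B C : Ty} :
      TypS (B :: Γ) t C → TypS Γ (.lam t) (.arr B C)
  | app {Γ : List Ty} {u v : Trm} {B C : Ty} :
      TypS Γ u (.arr B C) → TypS Γ v B → TypS Γ (.app u v) C

/-- Quantifier-free types (types of the simple type system S). -/
def QFree : Ty → Prop
  | .var _ => True
  | .const _ => True
  | .arr a b => QFree a ∧ QFree b
  | .all _ => False

/-- An input type : a closed type all of whose normal inhabitants are
typable in system F₀. -/
def IsInputType (E : Ty) : Prop :=
  TyClosed E ∧ ∀ t : Trm, IsNormal t → TypF [] t E → TypF0 [] t E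

/-- An output type : a closed type `S` not containing the constant `O` such
that for every normal term `t`, if `α : O ⊢_F t : S` then `α ∉ Fv(t)`. -/
def IsOutputType (S : Ty) : Prop :=
  TyClosed S ∧ ¬ ContainsConst 0 S ∧
    ∀ t : Trm, IsNormal t → TypF [tyO] t S → ¬ FreeIn 0 t

/-- A syntactical data type : a closed type which is both input and output. -/
def IsSyntacticalDataType (D : Ty) : Prop := IsInputType D ∧ IsOutputType D

mutual
  /-- The ∀⁺ types (positive quantifiers). -/
  inductive PosTy : Ty → Prop
    | var (n : ℕ) : PosTy (.var n)
    | arr {B A : Ty} : NegTy B → PosTy A → PosTy (.arr B A)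
    | all {A : Ty} : PosTy A → TyFreeIn 0 A → PosTy (.all A)
  /-- The ∀⁻ types (negative quantifiers). -/
  inductive NegTy : Ty → Prop
    | var (n : ℕ) : NegTy (.var n)
    | arr {B A : Ty} : PosTy B → NegTy A → NegTy (.arr B A)
end

/-- `EndsInConst c A` : the type `A` ends in the type constant `c`. -/
inductive EndsInConst : ℕ → Ty → Prop
  | base (c : ℕ) : EndsInConst c (.const c)
  | arr {c : ℕ} {A : Ty} (B : Ty) : EndsInConst c A → EndsInConst c (.arr B A)
  | all {c : ℕ} {A : Ty} : EndsInConst c A → EndsInConst c (.all A)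

/-- `EndsInVar k A` : the type `A` ends in the type variable `k`
(crossing a quantifier ∀X with X ≠ the variable is allowed). -/
inductive EndsInVar : ℕ → Ty → Prop
  | base (k : ℕ) : EndsInVar k (.var k)
  | arr {k : ℕ} {A : Ty} (B : Ty) : EndsInVar k A → EndsInVar k (.arr B A)
  | all {k : ℕ} {A : Ty} : EndsInVar (k + 1) A → EndsInVar k (.all A)

/-- The side condition of the restricted rule (∀e)_F : the body `A` of `∀X A`
(the variable X having index `k`) is of the form
`∀X₀(A₁ → ∀X₁(A₂ → … → ∀X_{n-1}(A_n → ∀X_n Y)…))` with `Y = X` or one of the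
`A_i` ending in `X`. -/
inductive FFForm : ℕ → Ty → Prop
  | base (k : ℕ) : FFForm k (.var k)
  | all {k : ℕ} {A : Ty} : FFForm (k + 1) A → FFForm k (.all A)
  | arrTail {k : ℕ} {C : Ty} (B : Ty) : FFForm k C → FFForm k (.arr B C)
  | arrHit {k : ℕ} {B C : Ty} : EndsInVar k B → (∃ j, EndsInVar j C) →
      FFForm k (.arr B C)

/-- The typing judgment of system F_F : system F where the rule (∀e) is
replaced by the restricted rule (∀e)_F. -/
inductive TypFF : List Ty → Trm → Ty → Prop
  | var (Γ : List Ty) (n : ℕ) (A : Ty) : Γ[n]? = some A → TypFF Γ (.var n) A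
  | abs {Γ : List Ty} {t : Trm} {B C : Ty} :
      TypFF (B :: Γ) t C → TypFF Γ (.lam t) (.arr B C)
  | app {Γ : List Ty} {u v : Trm} {B C : Ty} :
      TypFF Γ u (.arr B C) → TypFF Γ v B → TypFF Γ (.app u v) C
  | allI {Γ : List Ty} {t : Trm} {A : Ty} :
      TypFF (Γ.map (liftTy 1 0)) t A → TypFF Γ t (.all A)
  | allE {Γ : List Ty} {t : Trm} {A : Ty} (G : Ty) :
      FFForm 0 A → TypFF Γ t (.all A) → TypFF Γ t (substTy A 0 G)

/-- An output type of system F_F. -/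
def IsOutputTypeFF (S : Ty) : Prop :=
  TyClosed S ∧ ¬ ContainsConst 0 S ∧
    ∀ t : Trm, IsNormal t → TypFF [tyO] t S → ¬ FreeIn 0 t

/-- Saturated sets of λ-terms. -/
def Saturated (G : Set Trm) : Prop := ∀ t u : Trm, WHRed t u → u ∈ G → t ∈ G

/-- `G → G'` on sets of λ-terms. -/
def SetArr (G G' : Set Trm) : Set Trm := {u : Trm | ∀ t ∈ G, Trm.app u t ∈ G'}

/-- Extension of an interpretation by a set for the (de Bruijn) variable 0. -/
def consEnv (G : Set Trm) (I : ℕ → Set Trm) : ℕ → Set Trm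
  | 0 => G
  | n + 1 => I n

/-- The value `|A|_I` of a type in an interpretation (`C` interprets the
type constants, `I` the type variables). -/
def TyVal (C : ℕ → Set Trm) : Ty → (ℕ → Set Trm) → Set Trm
  | .var n, I => I n
  | .const c, _ => C c
  | .arr a b, I => SetArr (TyVal C a I) (TyVal C b I)
  | .all a, I => {t : Trm | ∀ G : Set Trm, Saturated G → t ∈ TyVal C a (consEnv G I)}

/-- `|A|` : the intersection of the values of `A` under all interpretations
by saturated sets. -/
def TyGlobal (A : Ty) : Set Trm :=
  {t : Trm | ∀ C I : ℕ → Set Trm, (∀ c, Saturated (C c)) → (∀ n, Saturated (I n)) →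
    t ∈ TyVal C A I}

/-- A data type in Krivine's sense : a closed type `A` with `|A| ≠ ∅` such that
every term of `|A|` β-reduces to a closed term. -/
def IsDataType (A : Ty) : Prop :=
  TyClosed A ∧ TyGlobal A ≠ ∅ ∧
    ∀ t ∈ TyGlobal A, ∃ t' : Trm, BetaRed t t' ∧ TrmClosed t'

/-- The product type `A ∧ B = ∀X((A → (B → X)) → X)` (X fresh). -/
def tyAnd (A B : Ty) : Ty :=
  .all (.arr (.arr (liftTy 1 0 A) (.arr (liftTy 1 0 B) (.var 0))) (.var 0))

/-- The disjoint sum type `A ∨ B = ∀X((A → X) → ((B → X) → X))` (X fresh). -/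
def tyOr (A B : Ty) : Ty :=
  .all (.arr (.arr (liftTy 1 0 A) (.var 0))
    (.arr (.arr (liftTy 1 0 B) (.var 0)) (.var 0)))

/-- The type `LA = ∀X(X → ((A → (X → X)) → X))` of lists of objects of `A`. -/
def tyList (A : Ty) : Ty :=
  .all (.arr (.var 0)
    (.arr (.arr (liftTy 1 0 A) (.arr (.var 0) (.var 0))) (.var 0)))

/-- Negation `¬A = A → ⊥`. -/
def tyNeg (A : Ty) : Ty := .arr A tyBot

/-- The Gödel translation `A*` : every atomic subformula `R` is replaced
by `¬R`. -/
def godel : Ty → Ty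
  | .var n => .arr (.var n) tyBot
  | .const c => .arr (.const c) tyBot
  | .arr a b => .arr (godel a) (godel b)
  | .all a => .all (godel a)

/-- `T` is a storage operator for the pair of types `(E, S)`. -/
def IsStorageOpPair (T : Trm) (E S : Ty) : Prop :=
  TrmClosed T ∧
    ∀ t : Trm, TypF [] t E →
      ∃ τ τ' : Trm, BetaEq τ τ' ∧ TypF [] τ' S ∧
        ∀ θ : Trm, BetaEq θ t →
          ∀ f : ℕ, ¬ FreeIn f θ → ¬ FreeIn f τ →
            ∃ σ : ℕ → Trm,
              WHRed (.app (.app T θ) (.var f)) (.app (.var f) (msubst σ τ))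

/-- `T` is a storage operator for the type `D`. -/
def IsStorageOp (T : Trm) (D : Ty) : Prop := IsStorageOpPair T D D

/-- The term `λx₁…λxₙ.α` (n-fold abstraction over the free variable `α`). -/
def nlam (n a : ℕ) : Trm := Trm.lam^[n] (Trm.var (a + n))

/-- The term `p_n = λx₁…λxₙλx.x`. -/
def pTrm (n : ℕ) : Trm := Trm.lam^[n] (Trm.lam (Trm.var 0))

/-- `B₁ → … → B_n → A`. -/
def mkArr (Bs : List Ty) (A : Ty) : Ty := Bs.foldr Ty.arr A

/-- The length `Lg(E)` of a type : the number of occurrences of `→` in it. -/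
def Lg : Ty → ℕ
  | .var _ => 0
  | .const _ => 0
  | .arr a b => Lg a + Lg b + 1
  | .all a => Lg a

/-- `SubtypeOf A E` : `A` is a subtype (subformula) of `E`. -/
inductive SubtypeOf : Ty → Ty → Prop
  | refl (A : Ty) : SubtypeOf A A
  | arrL {A B C : Ty} : SubtypeOf A B → SubtypeOf A (.arr B C)
  | arrR {A B C : Ty} : SubtypeOf A C → SubtypeOf A (.arr B C)
  | all {A B : Ty} : SubtypeOf A B → SubtypeOf A (.all B)

/-- `InAppPos k t` : the variable `k` occurs in application (function)
position in `t`, i.e. some subterm of `t` is of the form `(k)u`. -/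
def InAppPos : ℕ → Trm → Prop
  | _, .var _ => False
  | k, .app u v => u = .var k ∨ InAppPos k u ∨ InAppPos k v
  | k, .lam u => InAppPos (k + 1) u

/-- The simple translation `A^s` : `X^s = X`, `(B → C)^s = B^s → C^s`,
`(∀X B)^s = B^s` (the variables freed by erasing the quantifiers are collapsed
onto the type variable `0`). `d` counts the erased quantifiers. -/
def eraseTyAux : ℕ → Ty → Ty
  | d, .var n => .var (n - d)
  | _, .const c => .const c
  | d, .arr a b => .arr (eraseTyAux d a) (eraseTyAux d b)
  | d, .all a => eraseTyAux (d + 1) a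

/-- The simple translation `A^s`. -/
def eraseTy : Ty → Ty := eraseTyAux 0

/-- The identity term `λx.x`. -/
def idTrm : Trm := .lam (.var 0)

/-- The boolean `𝟙 = λxλy.x`. -/
def oneTrm : Trm := .lam (.lam (.var 1))

/-- The pair of λ-terms `(T_F, T'_F)` associated with a type `F` (the
distinguished variable `X` having de Bruijn index `k`; the term variable `α`
is the free term variable `0`):
`T_F = T'_F = λx.x` if `X ∉ Fv(F)`;
`T_X = λxλβλg.(g)xα`, `T'_X = λx.(x)α𝟙`;
`T_{C→D} = λxλy.(T_D)(x)(T'_C)y`, `T'_{C→D} = λxλy.(T'_D)(x)(T_C)y`;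
`T_{∀Y B} = λx.(T_B)x`, `T'_{∀Y B} = λx.(T'_B)x`. -/
def TTpair : ℕ → Ty → Trm × Trm
  | k, .var n =>
      if n = k then
        (.lam (.lam (.lam (.app (.app (.var 0) (.var 2)) (.var 3)))),
         .lam (.app (.app (.var 0) (.var 1)) oneTrm))
      else (idTrm, idTrm)
  | _, .const _ => (idTrm, idTrm)
  | k, .arr C D =>
      if tyFreeInB k (.arr C D) then
        (.lam (.lam (.app (liftTrm 2 0 (TTpair k D).1)
            (.app (.var 1) (.app (liftTrm 2 0 (TTpair k C).2) (.var 0))))),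
         .lam (.lam (.app (liftTrm 2 0 (TTpair k D).2)
            (.app (.var 1) (.app (liftTrm 2 0 (TTpair k C).1) (.var 0))))))
      else (idTrm, idTrm)
  | k, .all B =>
      if tyFreeInB k (.all B) then
        (.lam (.app (liftTrm 1 0 (TTpair (k + 1) B).1) (.var 0)),
         .lam (.app (liftTrm 1 0 (TTpair (k + 1) B).2) (.var 0)))
      else (idTrm, idTrm)



section Lemmas

theorem liftTy_zero (A : Ty) : ∀ k, liftTy 0 k A = A := by
  induction A <;> intro k <;> simp [liftTy, *]

theorem liftTy_comm (d : ℕ) (A : Ty) : ∀ j m, j ≤ m →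
    liftTy d (m + 1) (liftTy 1 j A) = liftTy 1 j (liftTy d m A) := by
  induction A with
  | var n =>
    intro j m hjm
    simp only [liftTy]
    by_cases h1 : n < j
    · rw [if_pos h1, if_pos (show n < m by omega)]
      simp only [liftTy]
      rw [if_pos (show n < m + 1 by omega), if_pos h1]
    · rw [if_neg h1]
      by_cases h2 : n < m
      · rw [if_pos h2]
        simp only [liftTy]
        rw [if_pos (show n + 1 < m + 1 by omega), if_neg h1]
      · rw [if_neg h2]
        simp only [liftTy]
        rw [if_neg (show ¬ n + 1 < m + 1 by omega), if_neg (show ¬ n + d < j by omega)]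
        congr 1
        omega
  | const c => intro j m _; rfl
  | arr a b iha ihb => intro j m h; simp [liftTy, iha j m h, ihb j m h]
  | all a ih => intro j m h; simp [liftTy, ih (j+1) (m+1) (by omega)]

theorem substTy_liftTy_cancel (A : Ty) : ∀ k B, substTy (liftTy 1 k A) k B = A := by
  induction A with
  | var n =>
    intro k B
    simp only [liftTy]
    by_cases h1 : n < k
    · rw [if_pos h1]
      simp only [substTy]
      rw [if_pos h1]
    · rw [if_neg h1]
      simp only [substTy]
      rw [if_neg (show ¬ n + 1 < k by omega), if_neg (show ¬ n + 1 = k by omega)]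
      congr 1
  | const c => intro k B; rfl
  | arr a b iha ihb => intro k B; simp [liftTy, substTy, iha, ihb]
  | all a ih => intro k B; simp [liftTy, substTy, ih]

theorem substTy_liftTy_var (A : Ty) : ∀ m, substTy (liftTy 1 (m + 1) A) m (.var 0) = A := by
  induction A with
  | var n =>
    intro m
    simp only [liftTy]
    by_cases h1 : n < m + 1
    · rw [if_pos h1]
      simp only [substTy]
      by_cases h2 : n < m
      · rw [if_pos h2]
      · rw [if_neg h2, if_pos (show n = m by omega)]
        simp only [liftTy]
        rw [if_neg (show ¬ (0:ℕ) < 0 by omega)]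
        congr 1
        omega
    · rw [if_neg h1]
      simp only [substTy]
      rw [if_neg (show ¬ n + 1 < m by omega), if_neg (show ¬ n + 1 = m by omega)]
      congr 1
  | const c => intro m; rfl
  | arr a b iha ihb => intro m; simp [liftTy, substTy, iha, ihb]
  | all a ih => intro m; simp [liftTy, substTy, ih]

theorem substTy_not_free (A : Ty) : ∀ k, tyFreeInB k A = false →
    ∀ B C, substTy A k B = substTy A k C := by
  induction A with
  | var n =>
    intro k h B C
    simp only [tyFreeInB, beq_eq_false_iff_ne, ne_eq] at h
    simp only [substTy]
    split
    · rfl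
    · simp [h]
  | const c => intro k _ B C; rfl
  | arr a b iha ihb =>
    intro k h B C
    simp only [tyFreeInB, Bool.or_eq_false_iff] at h
    simp [substTy, iha k h.1 B C, ihb k h.2 B C]
  | all a ih =>
    intro k h B C
    simp only [tyFreeInB] at h
    simp [substTy, ih (k+1) h B C]

theorem liftTy_tyAnd (d m : ℕ) (A B : Ty) :
    liftTy d m (tyAnd A B) = tyAnd (liftTy d m A) (liftTy d m B) := by
  have hA := liftTy_comm d A 0 m (Nat.zero_le m)
  have hB := liftTy_comm d B 0 m (Nat.zero_le m)
  simp [tyAnd, liftTy, hA, hB]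

theorem liftTy_tyO (d m : ℕ) : liftTy d m tyO = tyO := rfl

theorem typF_lift {Γ : List Ty} {t : Trm} {A : Ty} (h : TypF Γ t A) :
    ∀ Γ₁ Δ Γ₂ : List Ty, Γ = Γ₁ ++ Γ₂ →
      TypF (Γ₁ ++ Δ ++ Γ₂) (liftTrm Δ.length Γ₁.length t) A := by
  induction h with
  | var Γ n A hA =>
    intro Γ₁ Δ Γ₂ hΓ
    subst hΓ
    rw [List.getElem?_append] at hA
    by_cases hn : n < Γ₁.length
    · rw [if_pos hn] at hA
      simp only [liftTrm, if_pos hn]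
      apply TypF.var
      rw [List.append_assoc, List.getElem?_append, if_pos hn, hA]
    · rw [if_neg hn] at hA
      simp only [liftTrm, if_neg hn]
      apply TypF.var
      rw [List.append_assoc, List.getElem?_append,
        if_neg (by omega), List.getElem?_append,
        if_neg (by omega)]
      rw [show n + Δ.length - Γ₁.length - Δ.length = n - Γ₁.length by omega] at *
      exact hA
  | abs h ih =>
    intro Γ₁ Δ Γ₂ hΓ
    subst hΓ
    exact TypF.abs (ih (_ :: Γ₁) Δ Γ₂ rfl)
  | app hu hv ihu ihv =>
    intro Γ₁ Δ Γ₂ hΓ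
    exact TypF.app (ihu Γ₁ Δ Γ₂ hΓ) (ihv Γ₁ Δ Γ₂ hΓ)
  | allI h ih =>
    intro Γ₁ Δ Γ₂ hΓ
    subst hΓ
    apply TypF.allI
    have := ih (Γ₁.map (liftTy 1 0)) (Δ.map (liftTy 1 0)) (Γ₂.map (liftTy 1 0))
      (by simp [List.map_append])
    simpa [List.map_append] using this
  | allE G h ih =>
    intro Γ₁ Δ Γ₂ hΓ
    exact TypF.allE G (ih Γ₁ Δ Γ₂ hΓ)

theorem typF_lift2 {t : Trm} {A B₁ B₂ C : Ty} (h : TypF [C] t A) :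
    TypF [B₁, B₂, C] (liftTrm 2 0 t) A :=
  typF_lift h [] [B₁, B₂] [C] rfl

theorem typF_lift1 {t : Trm} {A B₁ C : Ty} (h : TypF [C] t A) :
    TypF [B₁, C] (liftTrm 1 0 t) A :=
  typF_lift h [] [B₁] [C] rfl

theorem id_typing (Γ : List Ty) (S : Ty) : TypF Γ idTrm (.arr S S) :=
  TypF.abs (TypF.var _ 0 S (by simp))

theorem TX_typing (H : Ty) :
    TypF [tyO] (.lam (.lam (.lam (.app (.app (.var 0) (.var 2)) (.var 3)))))
      (.arr H (.arr tyO (tyAnd H tyO))) := by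
  apply TypF.abs
  apply TypF.abs
  apply TypF.allI
  apply TypF.abs
  exact TypF.app
    (TypF.app (TypF.var _ 0 _ rfl) (TypF.var _ 2 _ rfl))
    (TypF.var _ 3 _ rfl)

theorem T'X_typing (H : Ty) :
    TypF [tyO] (.lam (.app (.app (.var 0) (.var 1)) oneTrm))
      (.arr (.arr tyO (tyAnd H tyO)) H) := by
  apply TypF.abs
  apply TypF.app (B := .arr H (.arr tyO H))
  · have h0 : TypF [Ty.arr tyO (tyAnd H tyO), tyO]
        (Trm.app (.var 0) (.var 1)) (tyAnd H tyO) :=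
      TypF.app (TypF.var _ 0 _ rfl) (TypF.var _ 1 _ rfl)
    have := TypF.allE H h0
    simpa [tyAnd, substTy, substTy_liftTy_cancel, liftTy_zero] using this
  · exact TypF.abs (TypF.abs (TypF.var _ 1 _ rfl))

theorem TTpair_typing_gen (G A : Ty) : ∀ k : ℕ,
    TypF [tyO] (TTpair k A).1
        (.arr (substTy A k G) (substTy A k (.arr tyO (tyAnd G tyO)))) ∧
      TypF [tyO] (TTpair k A).2
        (.arr (substTy A k (.arr tyO (tyAnd G tyO))) (substTy A k G)) := by
  induction A with
  | var n =>
    intro k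
    by_cases hnk : n = k
    · subst hnk
      simp only [TTpair, if_pos rfl, substTy, lt_irrefl, if_neg (lt_irrefl n), if_pos rfl]
      rw [show liftTy n 0 (Ty.arr tyO (tyAnd G tyO))
          = Ty.arr tyO (tyAnd (liftTy n 0 G) tyO) by
        show Ty.arr (liftTy n 0 tyO) (liftTy n 0 (tyAnd G tyO)) = _
        rw [liftTy_tyAnd]
        rfl]
      exact ⟨TX_typing _, T'X_typing _⟩
    · have hfree : tyFreeInB k (Ty.var n) = false := by
        simp [tyFreeInB, hnk]
      rw [substTy_not_free _ k hfree (.arr tyO (tyAnd G tyO)) G]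
      simp only [TTpair, if_neg hnk]
      exact ⟨id_typing _ _, id_typing _ _⟩
  | const c =>
    intro k
    exact ⟨id_typing _ _, id_typing _ _⟩
  | arr C D ihC ihD =>
    intro k
    by_cases h : tyFreeInB k (Ty.arr C D)
    · simp only [TTpair, if_pos h, substTy]
      constructor
      · apply TypF.abs
        apply TypF.abs
        exact TypF.app (typF_lift2 (ihD k).1)
          (TypF.app (TypF.var _ 1 _ rfl)
            (TypF.app (typF_lift2 (ihC k).2) (TypF.var _ 0 _ rfl)))
      · apply TypF.abs
        apply TypF.abs
        exact TypF.app (typF_lift2 (ihD k).2)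
          (TypF.app (TypF.var _ 1 _ rfl)
            (TypF.app (typF_lift2 (ihC k).1) (TypF.var _ 0 _ rfl)))
    · rw [Bool.not_eq_true] at h
      rw [substTy_not_free _ k h (.arr tyO (tyAnd G tyO)) G]
      simp only [TTpair, h, Bool.false_eq_true, if_false]
      exact ⟨id_typing _ _, id_typing _ _⟩
  | all B ihB =>
    intro k
    by_cases h : tyFreeInB k (Ty.all B)
    · simp only [TTpair, if_pos h, substTy]
      constructor
      · apply TypF.abs
        apply TypF.allI
        apply TypF.app (typF_lift1 (ihB (k+1)).1)
        have h0 : TypF [Ty.all (liftTy 1 1 (substTy B (k+1) G)), tyO]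
            (Trm.var 0) (Ty.all (liftTy 1 1 (substTy B (k+1) G))) :=
          TypF.var _ 0 _ rfl
        have := TypF.allE (.var 0) h0
        rw [substTy_liftTy_var] at this
        simpa [liftTy] using this
      · apply TypF.abs
        apply TypF.allI
        apply TypF.app (typF_lift1 (ihB (k+1)).2)
        have h0 : TypF [Ty.all (liftTy 1 1 (substTy B (k+1) (.arr tyO (tyAnd G tyO)))), tyO]
            (Trm.var 0)
            (Ty.all (liftTy 1 1 (substTy B (k+1) (.arr tyO (tyAnd G tyO))))) :=
          TypF.var _ 0 _ rfl
        have := TypF.allE (.var 0) h0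
        rw [substTy_liftTy_var] at this
        simpa [liftTy] using this
    · rw [Bool.not_eq_true] at h
      rw [substTy_not_free _ k h (.arr tyO (tyAnd G tyO)) G]
      simp only [TTpair, h, Bool.false_eq_true, if_false]
      exact ⟨id_typing _ _, id_typing _ _⟩

end Lemmas

/-- with `G° = O → (G ∧ O)`, for every type `A` :
`α : O ⊢_F T_A : A[G/X] → A[G°/X]` and `α : O ⊢_F T'_A : A[G°/X] → A[G/X]`
(the variable `X` is the type variable of de Bruijn index `0` of `A`,
and `α` is the term variable of index `0`). -/
theorem TTpair_typing (G A : Ty) :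
    TypF [tyO] (TTpair 0 A).1
        (.arr (substTy A 0 G) (substTy A 0 (.arr tyO (tyAnd G tyO)))) ∧
      TypF [tyO] (TTpair 0 A).2
        (.arr (substTy A 0 (.arr tyO (tyAnd G tyO))) (substTy A 0 G)) :=
  TTpair_typing_gen G A 0

end FarkhNour
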